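/- Let α ≥ 1 and β ≥ (3+√17)/2 be real numbers, let A_n = Γ(β)/Γ(αn+β) for n ≥ 1, and let m be a nonnegative integer. Then Σ_{n=1}^m (n+1) A_n + (β²/(3β+2)) Σ_{n=m+1}^∞ (n+1) A_n ≤ 1. -/

import Mathlib

/-!
Since `Γ(β + n + 1) = β (β + 1) ⋯ (β + n) Γ(β)` and `Γ` increases on `[2, ∞)`, for `α ≥ 1` the
coefficient `A_{n+1}` is at most `β⁻¹ (β + 1)⁻ⁿ`. Summing `(n + 2)` times this geometric majorant
gives `∑_{n ≥ 1} (n + 1) A_n ≤ (β + 1)(2β + 1) / β³ ≤ (3β + 2) / β²`, the last step because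
`β² ≥ β + 1`. The hypothesis on `β` is exactly `β² ≥ 3β + 2`, so the weight `β² / (3β + 2)` of
the tail is at least `1`; bounding the weights of the first `m` terms by it as well leaves
`β² / (3β + 2) · ∑_{n ≥ 1} (n + 1) A_n ≤ 1`.
-/

open Real Finset

noncomputable def mlCoeff (α β : ℝ) (n : ℕ) : ℝ := Gamma β / Gamma (α * n + β)

lemma pow_mul_Gamma_le_Gamma_add_nat {s : ℝ} (hs : 0 < s) (n : ℕ) :
    s ^ n * Gamma s ≤ Gamma (s + n) := by
  induction n with
  | zero => simp
  | succ n ih =>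
    have hsn : 0 < s + n := by positivity
    calc s ^ (n + 1) * Gamma s = s * (s ^ n * Gamma s) := by ring
      _ ≤ (s + n) * Gamma (s + n) := by
        gcongr
        exact le_add_of_nonneg_right n.cast_nonneg
      _ = Gamma (s + ↑(n + 1)) := by
        rw [Nat.cast_succ, ← add_assoc, Gamma_add_one hsn.ne']

lemma mlCoeff_succ_le {α β : ℝ} (hα : 1 ≤ α) (hβ : 1 ≤ β) (n : ℕ) :
    mlCoeff α β (n + 1) ≤ (β * (β + 1) ^ n)⁻¹ := by
  have hβ0 : 0 < β := by linarith
  have hlower : β * (β + 1) ^ n * Gamma β ≤ Gamma (β + 1 + n) := by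
    calc β * (β + 1) ^ n * Gamma β = (β + 1) ^ n * Gamma (β + 1) := by
          rw [Gamma_add_one hβ0.ne']; ring
      _ ≤ Gamma (β + 1 + n) := pow_mul_Gamma_le_Gamma_add_nat (by linarith) n
  have hmono : Gamma (β + 1 + n) ≤ Gamma (α * ↑(n + 1) + β) := by
    refine Gamma_strictMonoOn_Ici.monotoneOn ?_ ?_ ?_ <;>
      simp only [Set.mem_Ici, Nat.cast_succ] <;> nlinarith
  have hpos : 0 < β * (β + 1) ^ n * Gamma β := by positivity
  rw [mlCoeff, div_le_iff₀ (hpos.trans_le (hlower.trans hmono)), ← div_eq_inv_mul,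
    le_div_iff₀ (by positivity), mul_comm]
  exact hlower.trans hmono

lemma mlCoeff_nonneg {α β : ℝ} (hα : 0 ≤ α) (hβ : 0 < β) (n : ℕ) : 0 ≤ mlCoeff α β n := by
  unfold mlCoeff
  positivity

lemma hasSum_add_two_mul_geometric {x : ℝ} (hx : ‖x‖ < 1) :
    HasSum (fun k : ℕ ↦ ((k : ℝ) + 2) * x ^ k) ((2 - x) / (1 - x) ^ 2) := by
  have hx1 : 1 - x ≠ 0 := by
    rw [Real.norm_eq_abs, abs_lt] at hx
    linarith
  have hvalue : (2 - x) / (1 - x) ^ 2 = x / (1 - x) ^ 2 + 2 * (1 - x)⁻¹ := by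
    field_simp
    ring
  rw [hvalue]
  refine ((hasSum_coe_mul_geometric_of_norm_lt_one hx).add
    ((hasSum_geometric_of_norm_lt_one hx).mul_left 2)).congr_fun fun k ↦ ?_
  ring

lemma hasSum_geometric_majorant {β : ℝ} (hβ : 0 < β) :
    HasSum (fun k : ℕ ↦ ((k : ℝ) + 2) * (β * (β + 1) ^ k)⁻¹)
      ((β + 1) * (2 * β + 1) / β ^ 3) := by
  have hx : ‖(β + 1)⁻¹‖ < 1 := by
    rw [norm_inv, Real.norm_of_nonneg (by positivity)]
    exact inv_lt_one_of_one_lt₀ (by linarith)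
  have hone_sub : 1 - (β + 1)⁻¹ = β / (β + 1) := by
    field_simp
    ring
  have hvalue : (β + 1) * (2 * β + 1) / β ^ 3 =
      β⁻¹ * ((2 - (β + 1)⁻¹) / (1 - (β + 1)⁻¹) ^ 2) := by
    rw [hone_sub]
    field_simp
    ring
  rw [hvalue]
  refine ((hasSum_add_two_mul_geometric hx).mul_left β⁻¹).congr_fun fun k ↦ ?_
  rw [mul_inv, inv_pow]
  ring

lemma summable_weighted_mlCoeff_succ_and_tsum_le {α β : ℝ} (hα : 1 ≤ α) (hβ : 1 ≤ β) :
    Summable (fun k : ℕ ↦ ((k : ℝ) + 2) * mlCoeff α β (k + 1)) ∧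
      ∑' k : ℕ, ((k : ℝ) + 2) * mlCoeff α β (k + 1) ≤ (β + 1) * (2 * β + 1) / β ^ 3 := by
  have hmaj := hasSum_geometric_majorant (show 0 < β by linarith)
  have hle : ∀ k : ℕ, ((k : ℝ) + 2) * mlCoeff α β (k + 1) ≤ ((k : ℝ) + 2) * (β * (β + 1) ^ k)⁻¹ :=
    fun k ↦ mul_le_mul_of_nonneg_left (mlCoeff_succ_le hα hβ k) (by positivity)
  have hnonneg : ∀ k : ℕ, 0 ≤ ((k : ℝ) + 2) * mlCoeff α β (k + 1) :=
    fun k ↦ mul_nonneg (by positivity) (mlCoeff_nonneg (by linarith) (by linarith) _)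
  have hsum := Summable.of_nonneg_of_le hnonneg hle hmaj.summable
  exact ⟨hsum, hmaj.tsum_eq ▸ hsum.tsum_le_tsum hle hmaj.summable⟩

lemma sum_range_add_mul_tsum_nat_add_le {g : ℕ → ℝ} (hg : ∀ k, 0 ≤ g k) (hs : Summable g)
    {c : ℝ} (hc : 1 ≤ c) (m : ℕ) :
    ∑ k ∈ range m, g k + c * ∑' k, g (k + m) ≤ c * ∑' k, g k := by
  rw [← hs.sum_add_tsum_nat_add m, mul_add]
  gcongr
  exact le_mul_of_one_le_left (sum_nonneg fun k _ ↦ hg k) hc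

lemma three_mul_add_two_le_sq {β : ℝ} (hβ : (3 + √17) / 2 ≤ β) : 3 * β + 2 ≤ β ^ 2 := by
  have h17 : √17 ^ 2 = 17 := Real.sq_sqrt (by norm_num)
  nlinarith [Real.sqrt_nonneg 17]

theorem weighted_partial_sum_plus_tail_le_one (α β : ℝ) (hα : 1 ≤ α)
    (hβ : (3 + Real.sqrt 17) / 2 ≤ β) (m : ℕ) :
    (∑ n ∈ Finset.Icc 1 m, ((n : ℝ) + 1) * (Real.Gamma β / Real.Gamma (α * n + β))) +
      β ^ 2 / (3 * β + 2) *
        ∑' k : ℕ, ((m + 1 + k : ℕ) + 1 : ℝ) *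
          (Real.Gamma β / Real.Gamma (α * (m + 1 + k) + β)) ≤ 1 := by
  have hβsq := three_mul_add_two_le_sq hβ
  have hβ1 : 1 ≤ β := by linarith [Real.sqrt_nonneg 17]
  set g : ℕ → ℝ := fun k ↦ ((k : ℝ) + 2) * mlCoeff α β (k + 1)
  obtain ⟨hsum, htsum⟩ := summable_weighted_mlCoeff_succ_and_tsum_le hα hβ1
  have hpartial : ∑ n ∈ Icc 1 m, ((n : ℝ) + 1) * (Gamma β / Gamma (α * n + β)) =
      ∑ k ∈ range m, g k := by
    rw [← Ico_add_one_right_eq_Icc, range_eq_Ico, ← sum_Ico_add' _ 0 m 1]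
    refine sum_congr rfl fun k _ ↦ ?_
    simp only [g, mlCoeff, Nat.cast_succ]
    ring
  have htail : ∑' k : ℕ, ((m + 1 + k : ℕ) + 1 : ℝ) * (Gamma β / Gamma (α * (m + 1 + k) + β)) =
      ∑' k, g (k + m) := by
    refine tsum_congr fun k ↦ ?_
    simp only [g, mlCoeff]
    push_cast
    ring_nf
  rw [hpartial, htail]
  calc _ ≤ β ^ 2 / (3 * β + 2) * ∑' k, g k :=
        sum_range_add_mul_tsum_nat_add_le
          (fun k ↦ mul_nonneg (by positivity) (mlCoeff_nonneg (by linarith) (by linarith) _)) hsum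
          ((one_le_div (by positivity)).mpr hβsq) m
    _ ≤ β ^ 2 / (3 * β + 2) * ((β + 1) * (2 * β + 1) / β ^ 3) := by gcongr
    _ ≤ 1 := by
        rw [div_mul_div_comm, div_le_one (by positivity)]
        nlinarith
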